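/- arXiv:2401.05286 — 7 statements merged into one kernel-verified Lean document; each statement's English description precedes it below -/
import Mathlib

section
/- Let R be a finite chain ring with maximal ideal generated by γ of nilpotency index s, residue field of size p^m. Then any nonzero polynomial f ∈ R[x] of degree n has at most n·p^{(s-1)m} roots in R. -/
/-!
Write `f = C c * g` with `c ≠ 0` and `g` nonzero modulo the maximal ideal `𝔪 = (γ)`, by pulling
out the largest power of `γ` dividing every coefficient. At a root `x` of `f`, `c * g(x) = 0`
forces `g(x) ∈ 𝔪`, so the residue of `x` is one of the at most `n` roots of `ḡ`; each residue
class is a coset of `𝔪`. Finally `|𝔪| ≤ |k| ^ (s - 1)`, since every step `(γ^i) ⊇ (γ^(i+1))` of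
the `γ`-adic filtration has index at most `|k|`.
-/

open IsLocalRing Polynomial

theorem ncard_le_ncard_preimage_zero_mul_ncard_image {G H F : Type*} [AddGroup G] [Finite G]
    [AddGroup H] [FunLike F G H] [AddMonoidHomClass F G H] (f : F) (s : Set G) :
    s.ncard ≤ (f ⁻¹' {0}).ncard * (f '' s).ncard := by
  classical
  obtain ⟨S, rfl⟩ := s.toFinite.exists_finset_coe
  rw [Set.ncard_coe_finset, ← Finset.coe_image, Set.ncard_coe_finset]
  refine Finset.card_le_mul_card_image S _ fun b _ => ?_
  rcases (S.filter (f · = b)).eq_empty_or_nonempty with hempty | ⟨x₀, hx₀⟩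
  · simp [hempty]
  rw [← Set.ncard_coe_finset]
  refine Set.ncard_le_ncard_of_injOn (fun x => -x₀ + x) (fun x hx => ?_)
    (fun x _ y _ h => add_left_cancel h)
  simp only [Finset.coe_filter, Set.mem_ofPred_eq, Finset.mem_filter] at hx hx₀
  simp [hx.2, hx₀.2]

theorem Ideal.card_span_singleton_le {R : Type*} [CommRing R] [Finite R] (I : Ideal R) (a : R) :
    Nat.card (Ideal.span {a}) ≤ Nat.card (Ideal.span {a} * I) * Nat.card (R ⧸ I) := by
  have : Finite (R ⧸ I) := Finite.of_surjective _ Ideal.Quotient.mk_surjective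
  set J := Ideal.span {a} * I
  let g := Submodule.mapQ I J (LinearMap.mulLeft R a) fun x hx =>
    Ideal.mul_mem_mul (Ideal.mem_span_singleton_self a) hx
  have himage : Ideal.Quotient.mk J '' Ideal.span {a} ⊆ Set.range g := by
    rintro _ ⟨x, hx, rfl⟩
    obtain ⟨r, rfl⟩ := Ideal.mem_span_singleton'.mp hx
    exact ⟨Ideal.Quotient.mk I r, by rw [mul_comm]; rfl⟩
  have hker : Ideal.Quotient.mk J ⁻¹' {0} = J := by
    ext x; simp [Ideal.Quotient.eq_zero_iff_mem]
  calc Nat.card (Ideal.span {a})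
      ≤ Nat.card J * (Ideal.Quotient.mk J '' Ideal.span {a}).ncard := by
        simp only [← SetLike.coe_sort_coe, Nat.card_coe_set_eq, ← hker]
        exact ncard_le_ncard_preimage_zero_mul_ncard_image _ _
    _ ≤ Nat.card J * Nat.card (R ⧸ I) := by
        gcongr
        exact (Set.ncard_le_ncard himage).trans ((Nat.card_coe_set_eq _).symm.trans_le
          (Finite.card_range_le g))

theorem Ideal.card_span_pow_le {R : Type*} [CommRing R] [Finite R] {γ : R} {s : ℕ}
    (hγ : γ ^ s = 0) (i : ℕ) :
    Nat.card (Ideal.span {γ ^ i}) ≤ Nat.card (R ⧸ Ideal.span {γ}) ^ (s - i) := by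
  induction hd : s - i generalizing i with
  | zero =>
    rw [pow_eq_zero_of_le (by omega) hγ, Ideal.span_singleton_eq_bot.mpr rfl]
    simp
  | succ d ih =>
    calc Nat.card (Ideal.span {γ ^ i})
        ≤ Nat.card (Ideal.span {γ ^ (i + 1)}) * Nat.card (R ⧸ Ideal.span {γ}) := by
          rw [pow_succ, ← Ideal.span_singleton_mul_span_singleton]
          exact Ideal.card_span_singleton_le _ _
      _ ≤ Nat.card (R ⧸ Ideal.span {γ}) ^ d * Nat.card (R ⧸ Ideal.span {γ}) := by
          gcongr; exact ih (i + 1) (by omega)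
      _ = Nat.card (R ⧸ Ideal.span {γ}) ^ (d + 1) := (pow_succ _ _).symm

namespace IsLocalRing

variable {R : Type*} [CommRing R] [IsLocalRing R]

theorem residue_eq_zero_of_mul_eq_zero {c r : R} (hc : c ≠ 0) (h : c * r = 0) :
    residue R r = 0 := by
  rw [residue_eq_zero_iff, mem_maximalIdeal, mem_nonunits_iff]
  exact fun hr => hc (hr.mul_left_eq_zero.mp h)

theorem exists_eq_C_mul_map_residue_ne_zero {γ : R} (hmax : maximalIdeal R = Ideal.span {γ})
    {s : ℕ} (hγ : γ ^ s = 0) {f : R[X]} (hf : f ≠ 0) :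
    ∃ c g, f = C c * g ∧ c ≠ 0 ∧ g.map (residue R) ≠ 0 := by
  by_contra! h
  have hdvd : ∀ t, C (γ ^ t) ∣ f := by
    intro t
    induction t with
    | zero => simp
    | succ t ih =>
      obtain ⟨g, rfl⟩ := ih
      have hc : γ ^ t ≠ 0 := by rintro h0; simp [h0] at hf
      have hg : C γ ∣ g := by
        rw [C_dvd_iff_dvd_coeff]
        intro j
        rw [← Ideal.mem_span_singleton, ← hmax, ← residue_eq_zero_iff, ← coeff_map,
          h _ _ rfl hc, coeff_zero]
      rw [pow_succ, C_mul]
      exact mul_dvd_mul_left _ hg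
  obtain ⟨g, hg⟩ := hdvd s
  simp [hγ, hg] at hf

theorem eval_map_residue_eq_zero {c x : R} {g : R[X]} (hc : c ≠ 0) (hx : (C c * g).eval x = 0) :
    (g.map (residue R)).eval (residue R x) = 0 := by
  rw [eval_map_apply]
  exact residue_eq_zero_of_mul_eq_zero hc (by simpa using hx)

theorem natDegree_map_residue_le {c : R} {g : R[X]} (hc : c ≠ 0) :
    (g.map (residue R)).natDegree ≤ (C c * g).natDegree := by
  rw [natDegree_le_iff_coeff_eq_zero]
  intro j hj
  rw [coeff_map]
  refine residue_eq_zero_of_mul_eq_zero hc ?_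
  rw [← coeff_C_mul]
  exact coeff_eq_zero_of_natDegree_lt hj

theorem ncard_eval_residue_eq_zero_le [Finite R] {g : (ResidueField R)[X]} (hg : g ≠ 0) :
    {x : R | g.eval (residue R x) = 0}.ncard ≤ Nat.card (maximalIdeal R) * g.natDegree := by
  classical
  have hker : residue R ⁻¹' {0} = maximalIdeal R := by
    ext x; simp [residue_eq_zero_iff]
  have himage : residue R '' {x : R | g.eval (residue R x) = 0} ⊆ g.roots.toFinset := by
    rintro _ ⟨x, hx, rfl⟩
    simpa [mem_roots hg] using hx
  calc {x : R | g.eval (residue R x) = 0}.ncard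
      ≤ (residue R ⁻¹' {0}).ncard * (residue R '' {x : R | g.eval (residue R x) = 0}).ncard :=
        ncard_le_ncard_preimage_zero_mul_ncard_image _ _
    _ ≤ Nat.card (maximalIdeal R) * g.natDegree := by
        refine Nat.mul_le_mul (by rw [hker, ← SetLike.coe_sort_coe, Nat.card_coe_set_eq]) ?_
        calc _ ≤ (g.roots.toFinset : Set (ResidueField R)).ncard := Set.ncard_le_ncard himage
          _ ≤ Multiset.card g.roots := by
            rw [Set.ncard_coe_finset]; exact Multiset.toFinset_card_le _
          _ ≤ g.natDegree := card_roots' g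

end IsLocalRing

theorem stmt4_general (R : Type*) [CommRing R] [IsLocalRing R] [Fintype R] [DecidableEq R]
    (γ : R) (s p m n : ℕ)
    (hmax : IsLocalRing.maximalIdeal R = Ideal.span {γ})
    (hnilp : γ ^ s = 0)
    (hres : Nat.card (IsLocalRing.ResidueField R) = p ^ m)
    (f : Polynomial R) (hf : f ≠ 0) (hdeg : f.natDegree = n) :
    (Finset.univ.filter (fun x : R => f.eval x = 0)).card ≤ n * p ^ ((s - 1) * m) := by
  obtain ⟨c, g, rfl, hc, hg⟩ := exists_eq_C_mul_map_residue_ne_zero hmax hnilp hf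
  have hmaxCard : Nat.card (maximalIdeal R) ≤ p ^ ((s - 1) * m) := by
    have hk : Nat.card (R ⧸ Ideal.span {γ}) = p ^ m := hmax ▸ hres
    have := Ideal.card_span_pow_le hnilp 1
    rwa [pow_one, hk, ← pow_mul, mul_comm, ← hmax] at this
  calc (Finset.univ.filter (fun x : R => (C c * g).eval x = 0)).card
      = {x : R | (C c * g).eval x = 0}.ncard := by rw [← Set.ncard_coe_finset]; simp
    _ ≤ {x : R | (g.map (residue R)).eval (residue R x) = 0}.ncard :=
        Set.ncard_le_ncard fun _ => eval_map_residue_eq_zero hc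
    _ ≤ Nat.card (maximalIdeal R) * (g.map (residue R)).natDegree :=
        ncard_eval_residue_eq_zero_le hg
    _ ≤ p ^ ((s - 1) * m) * n := Nat.mul_le_mul hmaxCard (hdeg ▸ natDegree_map_residue_le hc)
    _ = n * p ^ ((s - 1) * m) := mul_comm _ _

/-- In a finite chain ring R with maximal ideal (γ) of nilpotency index s and residue field of
size p^m, any nonzero polynomial of degree n has at most n·p^{(s-1)m} roots in R. -/
theorem stmt4 (R : Type*) [CommRing R] [IsLocalRing R] [Fintype R] [DecidableEq R]
    [IsPrincipalIdealRing R]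
    (γ : R) (s p m n : ℕ) (hp : p.Prime)
    (hmax : IsLocalRing.maximalIdeal R = Ideal.span {γ})
    (hnilp : γ ^ s = 0) (hnilp' : γ ^ (s - 1) ≠ 0)
    (hres : Nat.card (IsLocalRing.ResidueField R) = p ^ m)
    (f : Polynomial R) (hf : f ≠ 0) (hdeg : f.natDegree = n) :
    (Finset.univ.filter (fun x : R => f.eval x = 0)).card ≤ n * p ^ ((s - 1) * m) :=
  stmt4_general R γ s p m n hmax hnilp hres f hf hdeg
end

section
/- Every code C ⊆ A^n over a finite alphabet A with locality r satisfies κ/n ≤ r/(r+1), where κ is the minimum size of an information set of C. -/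
/-!
Call a coordinate `i` determined by a set `T` if codewords agreeing on `T` agree at `i`.
Build `T` greedily: while some coordinate `i` is not determined by `T`, add the part of its
recovery set `S_i` that `T` does not yet determine. If `a ≤ r` coordinates are added, then the
set of determined coordinates grows by at least `a + 1` (the new ones and `i`), so the invariant
`|T| (r + 1) ≤ |determined T| r` is kept. At the end `T` determines every coordinate, i.e. it is
an information set, and `|T| (r + 1) ≤ n r`.
-/

open Finset

namespace Code

section Closure

variable {ι A : Type*}

def Determines (C : Set (ι → A)) (T : Finset ι) (i : ι) : Prop :=
  ∀ c ∈ C, ∀ d ∈ C, (∀ j ∈ T, c j = d j) → c i = d i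

variable {C : Set (ι → A)} {S T T' : Finset ι} {i : ι}

theorem determines_of_mem (hi : i ∈ T) : Determines C T i :=
  fun _ _ _ _ h => h i hi

theorem Determines.mono (hTT' : T ⊆ T') (h : Determines C T i) : Determines C T' i :=
  fun c hc d hd hagree => h c hc d hd fun j hj => hagree j (hTT' hj)

theorem Determines.trans (hS : ∀ j ∈ S, Determines C T j) (hi : Determines C S i) :
    Determines C T i :=
  fun c hc d hd hagree => hi c hc d hd fun j hj => hS j hj c hc d hd hagree

variable [Fintype ι]

open Classical in
noncomputable def determined (C : Set (ι → A)) (T : Finset ι) : Finset ι :=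
  univ.filter (Determines C T)

theorem mem_determined : i ∈ determined C T ↔ Determines C T i := by
  simp [determined]

theorem determined_mono (hTT' : T ⊆ T') : determined C T ⊆ determined C T' :=
  fun _ hi => mem_determined.mpr ((mem_determined.mp hi).mono hTT')

theorem card_determined_union_sdiff_ge [DecidableEq ι] (hi : i ∉ determined C T) (hiS : i ∉ S)
    (hS : Determines C S i) :
    (determined C T).card + (S \ determined C T).card + 1 ≤
      (determined C (T ∪ (S \ determined C T))).card := by
  set T' := T ∪ (S \ determined C T)
  have hS_sub : S ⊆ determined C T' := by
    intro j hj
    by_cases hjT : j ∈ determined C T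
    · exact determined_mono subset_union_left hjT
    · exact mem_determined.mpr
        (determines_of_mem (mem_union_right _ (mem_sdiff.mpr ⟨hj, hjT⟩)))
  have hi' : i ∈ determined C T' :=
    mem_determined.mpr (hS.trans fun j hj => mem_determined.mp (hS_sub hj))
  have hsub : insert i (S ∪ determined C T) ⊆ determined C T' :=
    insert_subset hi' (union_subset hS_sub (determined_mono subset_union_left))
  have hi_notMem : i ∉ S ∪ determined C T := by simp [hi, hiS]
  calc (determined C T).card + (S \ determined C T).card + 1
      = (insert i (S ∪ determined C T)).card := by
        rw [card_insert_of_notMem hi_notMem, ← card_sdiff_add_card, add_comm (S \ _).card]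
    _ ≤ (determined C T').card := card_le_card hsub

theorem exists_forall_determines [DecidableEq ι] {r : ℕ}
    (hloc : ∀ i, ∃ S : Finset ι, i ∉ S ∧ S.card ≤ r ∧ Determines C S i)
    (T : Finset ι) (hT : T.card * (r + 1) ≤ (determined C T).card * r) :
    ∃ U : Finset ι, U.card * (r + 1) ≤ Fintype.card ι * r ∧ ∀ i, Determines C U i := by
  by_cases hall : ∀ i, Determines C T i
  · exact ⟨T, hT.trans (Nat.mul_le_mul_right r (card_le_univ _)), hall⟩
  obtain ⟨i, hi⟩ := not_forall.mp hall
  obtain ⟨S, hiS, hSr, hS⟩ := hloc i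
  have hgrow := card_determined_union_sdiff_ge (mt mem_determined.mp hi) hiS hS
  have hT'card : (T ∪ (S \ determined C T)).card ≤ T.card + (S \ determined C T).card :=
    card_union_le _ _
  have hadded : (S \ determined C T).card ≤ r := (card_le_card sdiff_subset).trans hSr
  refine exists_forall_determines hloc (T ∪ (S \ determined C T)) ?_
  calc (T ∪ (S \ determined C T)).card * (r + 1)
      ≤ (T.card + (S \ determined C T).card) * (r + 1) := Nat.mul_le_mul_right _ hT'card
    _ ≤ ((determined C T).card + (S \ determined C T).card + 1) * r := by nlinarith
    _ ≤ _ := Nat.mul_le_mul_right r hgrow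
termination_by Fintype.card ι - (determined C T).card
decreasing_by
  have := card_le_univ (determined C (T ∪ (S \ determined C T)))
  omega

end Closure

section Restriction

variable {ι A : Type*} [DecidableEq A] {C : Finset (ι → A)}

theorem determines_of_card_image_eq [DecidableEq ι] {S : Finset ι} {i : ι}
    (h : (C.image fun c => fun j : S => c j.val).card =
      (C.image fun c => fun j : (insert i S : Finset ι) => c j.val).card) :
    Determines (C : Set (ι → A)) S i := by
  let restrictInsert := fun c : ι → A => fun j : (insert i S : Finset ι) => c j.val
  let forget := fun (f : {x // x ∈ insert i S} → A) (j : S) =>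
    f ⟨j.val, mem_insert_of_mem j.2⟩
  have hinj : Set.InjOn forget (C.image restrictInsert) := by
    rw [← card_image_iff, image_image]
    exact h
  intro c hc d hd hagree
  have := hinj (mem_image_of_mem _ hc) (mem_image_of_mem _ hd) (funext fun j => hagree j j.2)
  exact congrFun this ⟨i, mem_insert_self i S⟩

theorem card_image_restrict_eq_card {U : Finset ι}
    (h : ∀ i, Determines (C : Set (ι → A)) U i) :
    (C.image fun c => fun j : U => c j.val).card = C.card :=
  card_image_iff.mpr fun c hc d hd hcd =>
    funext fun i => h i c hc d hd fun j hj => congrFun hcd ⟨j, hj⟩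

end Restriction

end Code

theorem stmt10_general (n r κ : ℕ) (A : Type*) [DecidableEq A]
    (C : Finset (Fin n → A))
    (hloc : ∀ i : Fin n, ∃ S : Finset (Fin n), i ∉ S ∧ S.card ≤ r ∧
      (C.image (fun c => fun j : S => c j.val)).card =
        (C.image (fun c => fun j : (insert i S : Finset (Fin n)) => c j.val)).card)
    (hκ : IsLeast {k | ∃ S : Finset (Fin n), S.card = k ∧
      (C.image (fun c => fun j : S => c j.val)).card = C.card} κ) :
    κ * (r + 1) ≤ n * r := by
  have hloc' : ∀ i, ∃ S : Finset (Fin n), i ∉ S ∧ S.card ≤ r ∧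
      Code.Determines (C : Set (Fin n → A)) S i :=
    fun i => (hloc i).imp fun _ ⟨hiS, hSr, h⟩ =>
      ⟨hiS, hSr, Code.determines_of_card_image_eq h⟩
  obtain ⟨U, hU, hUdet⟩ := Code.exists_forall_determines hloc' ∅ (by simp)
  have hκU : κ ≤ U.card := hκ.2 ⟨U, rfl, Code.card_image_restrict_eq_card hUdet⟩
  calc κ * (r + 1) ≤ U.card * (r + 1) := Nat.mul_le_mul_right _ hκU
    _ ≤ n * r := by simpa using hU

/-- Every code C ⊆ A^n with locality r satisfies κ/n ≤ r/(r+1), i.e. κ(r+1) ≤ nr, where κ is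
the minimum size of an information set of C. -/
theorem stmt10 (n r κ : ℕ) (A : Type*) [Fintype A] [DecidableEq A]
    (C : Finset (Fin n → A))
    (hloc : ∀ i : Fin n, ∃ S : Finset (Fin n), i ∉ S ∧ S.card ≤ r ∧
      (C.image (fun c => fun j : S => c j.val)).card =
        (C.image (fun c => fun j : (insert i S : Finset (Fin n)) => c j.val)).card)
    (hκ : IsLeast {k | ∃ S : Finset (Fin n), S.card = k ∧
      (C.image (fun c => fun j : S => c j.val)).card = C.card} κ) :
    κ * (r + 1) ≤ n * r :=
  stmt10_general n r κ A C hloc hκ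
end

section
/- Let C be a code of length n over a finite alphabet with locality r, minimum Hamming distance d, and minimum information set size κ. Then d ≤ n - κ - ⌈κ/r⌉ + 2. -/
/-!
Call a coordinate determined by a set `S` of coordinates if any two codewords agreeing on `S`
agree there; this is a closure operator, information sets are the spanning sets, and locality
says every `i` is determined by some `r`-set avoiding it. Greedily adding to a set `R` the part
of a recovering set of a coordinate `i` not yet determined by `R` costs at most `r` new elements
but gains the extra coordinate `i`, so after `t = ⌊(κ - 1) / r⌋` rounds the closure of `R` has
at least `|R| + t` elements while `R` is still too small to span. Enlarging the closure to a
maximal non-spanning set `F` and adding one more coordinate gives a spanning set of size at most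
`|R| + |F| - |cl R| + 1`, whence `κ + t ≤ |F| + 1`. Two distinct codewords agree on `F`, so
`d ≤ n - |F|`.
-/

open Finset

namespace ClosureOperator

variable {α : Type*} [DecidableEq α] (cl : ClosureOperator (Finset α))

theorem card_closure_add_card_sdiff_lt {R S : Finset α} {i : α} (hiS : i ∉ S) (hi : i ∈ cl S)
    (hiR : i ∉ cl R) : #(cl R) + #(S \ cl R) < #(cl (R ∪ (S \ cl R))) := by
  set R' := R ∪ (S \ cl R)
  have hS : S ⊆ cl R' := fun j hj => by
    by_cases hjR : j ∈ cl R
    · exact cl.monotone subset_union_left hjR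
    · exact cl.le_closure R' (mem_union_right _ (mem_sdiff.mpr ⟨hj, hjR⟩))
  have hsub : insert i (cl R ∪ S) ⊆ cl R' := by
    refine insert_subset ?_ (union_subset (cl.monotone subset_union_left) hS)
    exact cl.le_closure_iff.mp hS hi
  have hi' : i ∉ cl R ∪ S := by simp [hiR, hiS]
  calc #(cl R) + #(S \ cl R) = #(cl R ∪ S) := by rw [add_comm, card_sdiff_add_card, union_comm]
    _ < #(insert i (cl R ∪ S)) := by rw [card_insert_of_notMem hi']; omega
    _ ≤ #(cl R') := card_le_card hsub

variable [Fintype α] {cl} {r κ : ℕ}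

theorem exists_card_add_le_card_closure
    (hloc : ∀ i, ∃ S : Finset α, i ∉ S ∧ #S ≤ r ∧ i ∈ cl S)
    (hκ : ∀ K, cl K = univ → κ ≤ #K) :
    ∀ t, t * r < κ → ∃ R : Finset α, #R ≤ t * r ∧ #R + t ≤ #(cl R)
  | 0, _ => ⟨∅, by simp⟩
  | t + 1, ht => by
    have ht' : t * r < κ := (Nat.mul_le_mul_right r t.le_succ).trans_lt ht
    obtain ⟨R, hRcard, hR⟩ := exists_card_add_le_card_closure hloc hκ t ht'
    have hspan : cl R ≠ univ := fun h => by have := hκ R h; omega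
    obtain ⟨i, hiR⟩ : ∃ i, i ∉ cl R := by simpa [eq_univ_iff_forall] using hspan
    obtain ⟨S, hiS, hSr, hi⟩ := hloc i
    have hgain := cl.card_closure_add_card_sdiff_lt hiS hi hiR
    have hR'card : #(R ∪ (S \ cl R)) ≤ #R + #(S \ cl R) := card_union_le _ _
    have hSdiff : #(S \ cl R) ≤ r := (card_le_card sdiff_subset).trans hSr
    exact ⟨R ∪ (S \ cl R), by rw [add_mul, one_mul]; omega, by omega⟩

theorem exists_card_add_card_closure_le (hκ : ∀ K, cl K = univ → κ ≤ #K) {R : Finset α}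
    (hR : cl R ≠ univ) : ∃ F, cl F ≠ univ ∧ κ + #(cl R) ≤ #F + #R + 1 := by
  set 𝓕 := (univ : Finset (Finset α)).filter fun F => cl R ⊆ F ∧ cl F ≠ univ
  have h𝓕 : 𝓕.Nonempty := ⟨cl R, by simp [𝓕, hR]⟩
  obtain ⟨F, hF, hFmax⟩ := exists_max_image 𝓕 card h𝓕
  simp only [𝓕, mem_filter, mem_univ, true_and] at hF hFmax
  obtain ⟨hRF, hFspan⟩ := hF
  obtain ⟨u, huF⟩ : ∃ u, u ∉ F := by
    by_contra! h
    exact hFspan (eq_univ_of_forall fun j => cl.le_closure F (h j))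
  have hspan : cl (insert u F) = univ := by
    by_contra h
    have := hFmax _ ⟨hRF.trans (subset_insert u F), h⟩
    rw [card_insert_of_notMem huF] at this
    omega
  set K := insert u (R ∪ (F \ cl R))
  have hFK : insert u F ⊆ cl K := by
    refine insert_subset (cl.le_closure K (mem_insert_self _ _)) fun j hj => ?_
    by_cases hjR : j ∈ cl R
    · exact cl.monotone (subset_union_left.trans (subset_insert u _)) hjR
    · exact cl.le_closure K (mem_insert_of_mem (mem_union_right _ (mem_sdiff.mpr ⟨hj, hjR⟩)))
  have hKspan : cl K = univ :=
    eq_univ_of_forall fun j => cl.le_closure_iff.mp hFK (hspan ▸ mem_univ j)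
  have hK : #K ≤ #R + (#F - #(cl R)) + 1 := by
    rw [← card_sdiff_of_subset hRF]
    exact (card_insert_le _ _).trans (by simpa using card_union_le R (F \ cl R))
  have := card_le_card hRF
  exact ⟨F, hFspan, by have := hκ K hKspan; omega⟩

theorem exists_closure_ne_univ_and_add_ceilDiv_le
    (hloc : ∀ i, ∃ S : Finset α, i ∉ S ∧ #S ≤ r ∧ i ∈ cl S)
    (hκ : ∀ K, cl K = univ → κ ≤ #K) (hκ₀ : 0 < κ) :
    ∃ F, cl F ≠ univ ∧ κ + (κ + r - 1) / r ≤ #F + 2 := by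
  have htr := Nat.div_mul_le_self (κ - 1) r
  obtain ⟨R, hRcard, hR⟩ := exists_card_add_le_card_closure hloc hκ ((κ - 1) / r) (by omega)
  have hspan : cl R ≠ univ := fun h => by have := hκ R h; omega
  obtain ⟨F, hF, hFcard⟩ := exists_card_add_card_closure_le hκ hspan
  have hceil : (κ + r - 1) / r ≤ (κ - 1) / r + 1 := by
    rcases Nat.eq_zero_or_pos r with rfl | hr
    · simp
    rw [show κ + r - 1 = κ - 1 + r by omega, Nat.add_div_right _ hr]
  exact ⟨F, hF, by omega⟩

end ClosureOperator

namespace Code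

variable {ι A : Type*} [Fintype ι] [DecidableEq ι] [DecidableEq A]

def determinedBy (C : Finset (ι → A)) : ClosureOperator (Finset ι) :=
  .mk₂ (fun S => ({i | ∀ c₁ ∈ C, ∀ c₂ ∈ C, (∀ j ∈ S, c₁ j = c₂ j) → c₁ i = c₂ i} : Finset ι))
    (fun S i hi => by
      simp only [mem_filter, mem_univ, true_and]
      exact fun c₁ _ c₂ _ h => h i hi)
    (fun S T hST i hi => by
      simp only [mem_filter, mem_univ, true_and, subset_iff] at hST hi ⊢
      exact fun c₁ h₁ c₂ h₂ h => hi c₁ h₁ c₂ h₂ fun j hj => hST hj c₁ h₁ c₂ h₂ h)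

variable {C : Finset (ι → A)}

theorem mem_determinedBy {S : Finset ι} {i : ι} :
    i ∈ determinedBy C S ↔ ∀ c₁ ∈ C, ∀ c₂ ∈ C, (∀ j ∈ S, c₁ j = c₂ j) → c₁ i = c₂ i := by
  simp [determinedBy]

theorem determinedBy_eq_univ_iff {S : Finset ι} :
    determinedBy C S = univ ↔ ∀ c₁ ∈ C, ∀ c₂ ∈ C, (∀ j ∈ S, c₁ j = c₂ j) → c₁ = c₂ := by
  simp only [eq_univ_iff_forall, mem_determinedBy, funext_iff]
  exact ⟨fun h c₁ h₁ c₂ h₂ hS i => h i c₁ h₁ c₂ h₂ hS, fun h i c₁ h₁ c₂ h₂ hS => h c₁ h₁ c₂ h₂ hS i⟩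

theorem card_image_restrict_eq_card_iff {S : Finset ι} :
    #(C.image fun c (j : S) => c j) = #C ↔ determinedBy C S = univ := by
  rw [card_image_iff, determinedBy_eq_univ_iff]
  refine ⟨fun h c₁ h₁ c₂ h₂ hS => h h₁ h₂ (funext fun j => hS j j.2),
    fun h c₁ h₁ c₂ h₂ hS => h c₁ h₁ c₂ h₂ fun j hj => congrFun hS (⟨j, hj⟩ : S)⟩

theorem mem_determinedBy_of_card_image_restrict_eq {S : Finset ι} {i : ι}
    (h : #(C.image fun c (j : S) => c j) =
      #(C.image fun c (j : (insert i S : Finset ι)) => c j)) :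
    i ∈ determinedBy C S := by
  set proj : (↥(insert i S) → A) → S → A := fun f j => f ⟨j.1, mem_insert_of_mem j.2⟩
  have hinj : Set.InjOn proj (C.image fun c (j : (insert i S : Finset ι)) => c j) := by
    apply injOn_of_card_image_eq
    rw [image_image, ← h]
    rfl
  rw [mem_determinedBy]
  intro c₁ h₁ c₂ h₂ hS
  have := hinj (mem_image_of_mem _ h₁) (mem_image_of_mem _ h₂) (funext fun j => hS j j.2)
  exact congrFun this ⟨i, mem_insert_self i S⟩

theorem hammingDist_add_card_le {c₁ c₂ : ι → A} {F : Finset ι} (hF : ∀ j ∈ F, c₁ j = c₂ j) :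
    hammingDist c₁ c₂ + #F ≤ Fintype.card ι := by
  have hsub : ({j | c₁ j ≠ c₂ j} : Finset ι) ⊆ Fᶜ := fun j hj =>
    mem_compl.mpr fun hjF => (mem_filter.mp hj).2 (hF j hjF)
  have := card_le_card hsub
  rw [card_compl] at this
  have := card_le_univ F
  unfold hammingDist
  omega

end Code

theorem stmt11_general (n r d κ : ℕ) (A : Type*) [DecidableEq A]
    (C : Finset (Fin n → A))
    (hloc : ∀ i : Fin n, ∃ S : Finset (Fin n), i ∉ S ∧ S.card ≤ r ∧
      (C.image (fun c => fun j : S => c j.val)).card =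
        (C.image (fun c => fun j : (insert i S : Finset (Fin n)) => c j.val)).card)
    (hκ : IsLeast {k | ∃ S : Finset (Fin n), S.card = k ∧
      (C.image (fun c => fun j : S => c j.val)).card = C.card} κ)
    (hd_le : ∀ c₁ ∈ C, ∀ c₂ ∈ C, c₁ ≠ c₂ → d ≤ hammingDist c₁ c₂)
    (hd_ex : ∃ c₁ ∈ C, ∃ c₂ ∈ C, c₁ ≠ c₂ ∧ hammingDist c₁ c₂ = d) :
    d + κ + (κ + r - 1) / r ≤ n + 2 := by
  obtain ⟨c₁, h₁, c₂, h₂, hne, -⟩ := hd_ex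
  have hκ₀ : 0 < κ := by
    obtain ⟨S, hSκ, hS⟩ := hκ.1
    refine Nat.pos_of_ne_zero fun h => hne ?_
    rw [h, card_eq_zero] at hSκ
    subst hSκ
    exact Code.determinedBy_eq_univ_iff.mp (Code.card_image_restrict_eq_card_iff.mp hS)
      c₁ h₁ c₂ h₂ (by simp)
  obtain ⟨F, hF, hFcard⟩ := ClosureOperator.exists_closure_ne_univ_and_add_ceilDiv_le
    (cl := Code.determinedBy C)
    (fun i => (hloc i).imp fun S ⟨hiS, hSr, hS⟩ =>
      ⟨hiS, hSr, Code.mem_determinedBy_of_card_image_restrict_eq hS⟩)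
    (fun K hK => hκ.2 ⟨K, rfl, Code.card_image_restrict_eq_card_iff.mpr hK⟩) hκ₀
  obtain ⟨e₁, he₁, e₂, he₂, hagree, hne'⟩ :
      ∃ e₁ ∈ C, ∃ e₂ ∈ C, (∀ j ∈ F, e₁ j = e₂ j) ∧ e₁ ≠ e₂ := by
    simpa [Code.determinedBy_eq_univ_iff] using hF
  have hdist := Code.hammingDist_add_card_le hagree
  rw [Fintype.card_fin] at hdist
  have := hd_le e₁ he₁ e₂ he₂ hne'
  omega

/-- LRC bound: a code of length n over a finite alphabet with locality r, minimum Hamming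
distance d and minimum information set size κ satisfies d ≤ n - κ - ⌈κ/r⌉ + 2. -/
theorem stmt11 (n r d κ : ℕ) (hr : 0 < r) (A : Type*) [Fintype A] [DecidableEq A]
    (C : Finset (Fin n → A))
    (hloc : ∀ i : Fin n, ∃ S : Finset (Fin n), i ∉ S ∧ S.card ≤ r ∧
      (C.image (fun c => fun j : S => c j.val)).card =
        (C.image (fun c => fun j : (insert i S : Finset (Fin n)) => c j.val)).card)
    (hκ : IsLeast {k | ∃ S : Finset (Fin n), S.card = k ∧
      (C.image (fun c => fun j : S => c j.val)).card = C.card} κ)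
    (hd_le : ∀ c₁ ∈ C, ∀ c₂ ∈ C, c₁ ≠ c₂ → d ≤ hammingDist c₁ c₂)
    (hd_ex : ∃ c₁ ∈ C, ∃ c₂ ∈ C, c₁ ≠ c₂ ∧ hammingDist c₁ c₂ = d) :
    d + κ + (κ + r - 1) / r ≤ n + 2 :=
  stmt11_general n r d κ A C hloc hκ hd_le hd_ex
end

section
/- Let R be a finite chain ring and C an R-linear code of length n and rank K (the minimal K such that C embeds into R^K as an R-module). Then the minimum Hamming distance of C satisfies d ≤ n - K + 1. -/
/-!
Puncturing a code at `d - 1` coordinates is injective: the difference of two codewords that agree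
on the remaining `n - (d - 1)` coordinates has weight at most `d - 1`, so it is zero. Hence the
code embeds into `R ^ (n - d + 1)`, and the rank is at most `n - d + 1`.
-/

open Finset

theorem hammingNorm_le_card_sub_card_of_comp_eq_zero {ι κ β : Type*} [Fintype ι] [Fintype κ]
    [Zero β] [DecidableEq β] (f : κ ↪ ι) {x : ι → β} (hx : x ∘ f = 0) :
    hammingNorm x ≤ Fintype.card ι - Fintype.card κ := by
  classical
  have hsupp : ({i | x i ≠ 0} : Finset ι) ⊆ (univ.map f)ᶜ := by
    intro i hi
    simp only [mem_filter, mem_univ, true_and] at hi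
    simp only [mem_compl, mem_map, mem_univ, true_and, not_exists]
    rintro k rfl
    exact hi (congrFun hx k)
  calc hammingNorm x ≤ #(univ.map f)ᶜ := card_le_card hsupp
    _ = Fintype.card ι - Fintype.card κ := by rw [card_compl, card_map, card_univ]

theorem injective_funLeft_comp_subtype_of_card_lt {R M ι κ : Type*} [Ring R]
    [AddCommGroup M] [Module R M] [DecidableEq M] [Fintype ι] [Fintype κ]
    (C : Submodule R (ι → M)) {d : ℕ} (hd : ∀ c ∈ C, c ≠ 0 → d ≤ hammingNorm c) (f : κ ↪ ι)
    (hcard : Fintype.card ι < Fintype.card κ + d) :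
    Function.Injective ((LinearMap.funLeft R M f).comp C.subtype) := by
  refine (injective_iff_map_eq_zero _).mpr fun c hc => ?_
  by_contra hc0
  have hweight := hd c c.2 (by simpa using hc0)
  have hpunct := hammingNorm_le_card_sub_card_of_comp_eq_zero f (x := (c : ι → M)) hc
  have hfκ := Fintype.card_le_of_embedding f
  omega

theorem stmt12_general (R : Type*) [CommRing R]
    [DecidableEq R]
    (n K d : ℕ) (C : Submodule R (Fin n → R))
    (hK : IsLeast {k | ∃ φ : C →ₗ[R] (Fin k → R), Function.Injective φ} K)
    (hd : IsLeast {e | ∃ c ∈ C, c ≠ 0 ∧ hammingNorm c = e} d) :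
    d + K ≤ n + 1 := by
  obtain ⟨⟨c, -, hc0, rfl⟩, hmin⟩ := hd
  have hpos : 0 < hammingNorm c := hammingNorm_pos_iff.mpr hc0
  have hle : hammingNorm c ≤ n := by simpa using hammingNorm_le_card_fintype (x := c)
  have hK_le : K ≤ n - (hammingNorm c - 1) :=
    hK.2 ⟨_, injective_funLeft_comp_subtype_of_card_lt C (fun x hx hx0 => hmin ⟨x, hx, hx0, rfl⟩)
      (Fin.castLEEmb (Nat.sub_le _ _)) (by simp only [Fintype.card_fin]; omega)⟩
  omega

/-- Generalized Singleton bound: an R-linear code of length n and rank K over a finite chain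
ring R has minimum distance d ≤ n - K + 1. -/
theorem stmt12 (R : Type*) [CommRing R] [IsLocalRing R] [Finite R] [IsPrincipalIdealRing R]
    [DecidableEq R]
    (n K d : ℕ) (C : Submodule R (Fin n → R))
    (hK : IsLeast {k | ∃ φ : C →ₗ[R] (Fin k → R), Function.Injective φ} K)
    (hd : IsLeast {e | ∃ c ∈ C, c ≠ 0 ∧ hammingNorm c = e} d) :
    d + K ≤ n + 1 :=
  stmt12_general R n K d C hK hd
end

section
/- Let R = R_1 × ... × R_w be a finite product of finite chain rings and C = C_1 × ... × C_w ⊆ R^n a product of R_i-linear codes C_i ⊆ R_i^n of rank K_i. Then the rank of C as an R-module (minimum K with an R-module embedding C → R^K) equals max_i K_i. -/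
/-!
The idempotents `Pi.single i 1` split every module and every linear map over `Π i, R i`
componentwise: a `(Π i, R i)`-linear map `Π i, M i → Π i, N i` is the product of its
`R i`-linear components, and it is injective iff all components are. Hence `C` embeds into
`(Π i, R i)^k` iff every `C i` embeds into `R i ^ k`; as embeddability into `R i ^ k` is
monotone in `k` (pad with zeros), the least such `k` is `max i, K i`.
-/

open Function

section PiRing

variable {ι : Type*} [DecidableEq ι] {R : ι → Type*} [∀ i, Semiring (R i)]
  {M N : ι → Type*} [∀ i, AddCommMonoid (M i)] [∀ i, Module (R i) (M i)]
  [∀ i, AddCommMonoid (N i)] [∀ i, Module (R i) (N i)]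

theorem Pi.single_one_smul (i : ι) (x : ∀ i, M i) :
    (Pi.single i 1 : ∀ i, R i) • x = Pi.single i (x i) := by
  ext j
  by_cases h : j = i
  · subst h; simp
  · simp [h]

namespace LinearMap

def piComponent (f : (∀ i, M i) →ₗ[∀ i, R i] ∀ i, N i) (i : ι) : M i →ₗ[R i] N i where
  toFun m := f (Pi.single i m) i
  map_add' m m' := by simp [Pi.single_add]
  map_smul' r m := by simp [Pi.single_smul₀ i r m]

theorem apply_eq_piComponent (f : (∀ i, M i) →ₗ[∀ i, R i] ∀ i, N i) (x : ∀ i, M i) (i : ι) :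
    f x i = f.piComponent i (x i) := by
  calc f x i = ((Pi.single i 1 : ∀ i, R i) • f x) i := by simp
    _ = f (Pi.single i (x i)) i := by rw [← map_smul, Pi.single_one_smul]

theorem map_single (f : (∀ i, M i) →ₗ[∀ i, R i] ∀ i, N i) (i : ι) (m : M i) :
    f (Pi.single i m) = Pi.single i (f.piComponent i m) := by
  ext j
  rw [apply_eq_piComponent]
  by_cases h : j = i
  · subst h; simp
  · simp [h]

theorem piComponent_injective {f : (∀ i, M i) →ₗ[∀ i, R i] ∀ i, N i} (hf : Injective f) (i : ι) :
    Injective (f.piComponent i) := fun m m' h =>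
  Pi.single_injective i (hf (by rw [map_single, map_single, h]))

end LinearMap

theorem exists_injective_pi_iff :
    (∃ f : (∀ i, M i) →ₗ[∀ i, R i] ∀ i, N i, Injective f) ↔
      ∀ i, ∃ g : M i →ₗ[R i] N i, Injective g := by
  refine ⟨fun ⟨f, hf⟩ i => ⟨f.piComponent i, LinearMap.piComponent_injective hf i⟩, fun h => ?_⟩
  choose g hg using h
  let f : (∀ i, M i) →ₗ[∀ i, R i] ∀ i, N i :=
    { toFun := Pi.map fun i => g i
      map_add' _ _ := by ext; simp
      map_smul' _ _ := by ext; simp }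
  exact ⟨f, Injective.piMap hg⟩

end PiRing

theorem exists_injective_congr {R M M' N N' : Type*} [Semiring R]
    [AddCommMonoid M] [Module R M] [AddCommMonoid M'] [Module R M']
    [AddCommMonoid N] [Module R N] [AddCommMonoid N'] [Module R N']
    (e : M ≃ₗ[R] M') (e' : N ≃ₗ[R] N') :
    (∃ f : M →ₗ[R] N, Injective f) ↔ ∃ f : M' →ₗ[R] N', Injective f :=
  ⟨fun ⟨f, hf⟩ => ⟨e'.toLinearMap ∘ₗ f ∘ₗ e.symm.toLinearMap,
      e'.injective.comp (hf.comp e.symm.injective)⟩,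
    fun ⟨f, hf⟩ => ⟨e'.symm.toLinearMap ∘ₗ f ∘ₗ e.toLinearMap,
      e'.symm.injective.comp (hf.comp e.injective)⟩⟩

theorem exists_injective_fin_of_le {R M : Type*} [Semiring R] [AddCommMonoid M] [Module R M]
    {k k' : ℕ} (hk : k ≤ k') (h : ∃ f : M →ₗ[R] Fin k → R, Injective f) :
    ∃ f : M →ₗ[R] Fin k' → R, Injective f :=
  let ⟨f, hf⟩ := h
  ⟨ExtendByZero.linearMap R (Fin.castLE hk) ∘ₗ f,
    (extend_injective (Fin.castLE_injective hk) 0).comp hf⟩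

theorem isLeast_setOf_forall {ι : Type*} [Finite ι] {P : ι → ℕ → Prop} {K : ι → ℕ}
    (hP : ∀ i, Monotone (P i)) (hK : ∀ i, IsLeast {k | P i k} (K i)) :
    IsLeast {k | ∀ i, P i k} (⨆ i, K i) :=
  ⟨fun i => hP i (le_ciSup (Finite.bddAbove_range K) i) (hK i).1,
    fun _ hk => ciSup_le' fun i => (hK i).2 (hk i)⟩

section ProductCode

variable {ι : Type*} {R : ι → Type*} [∀ i, Semiring (R i)] (κ : Type*)

def productCode (C : ∀ i, Submodule (R i) (κ → R i)) : Submodule (∀ i, R i) (κ → ∀ i, R i) where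
  carrier := {x | ∀ i, (fun j => x j i) ∈ C i}
  add_mem' hx hy i := (C i).add_mem (hx i) (hy i)
  zero_mem' i := (C i).zero_mem
  smul_mem' r _ hx i := (C i).smul_mem (r i) (hx i)

def productCodeEquiv (C : ∀ i, Submodule (R i) (κ → R i)) :
    productCode κ C ≃ₗ[∀ i, R i] ∀ i, C i where
  toFun x i := ⟨fun j => x.1 j i, x.2 i⟩
  invFun y := ⟨fun j i => (y i).1 j, fun i => (y i).2⟩
  map_add' _ _ := rfl
  map_smul' _ _ := rfl
  left_inv _ := rfl
  right_inv _ := rfl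

def piCommLinearEquiv : (κ → ∀ i, R i) ≃ₗ[∀ i, R i] ∀ i, κ → R i where
  toFun x i j := x j i
  invFun y j i := y i j
  map_add' _ _ := rfl
  map_smul' _ _ := rfl
  left_inv _ := rfl
  right_inv _ := rfl

end ProductCode

theorem stmt14_general (w n : ℕ) (R : Fin w → Type*)
    [∀ i, CommRing (R i)]
    (C : ∀ i, Submodule (R i) (Fin n → R i)) (K : Fin w → ℕ)
    (hK : ∀ i, IsLeast {k | ∃ φ : (C i) →ₗ[R i] (Fin k → R i), Function.Injective φ} (K i))
    (Cprod : Submodule (∀ i, R i) (Fin n → ∀ i, R i))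
    (hCprod : ∀ x : Fin n → ∀ i, R i, x ∈ Cprod ↔ ∀ i, (fun j => x j i) ∈ C i)
    (Kp : ℕ)
    (hKp : IsLeast {k | ∃ φ : Cprod →ₗ[∀ i, R i] (Fin k → ∀ i, R i),
      Function.Injective φ} Kp) :
    Kp = ⨆ i, K i := by
  obtain rfl : Cprod = productCode (Fin n) C := Submodule.ext hCprod
  have hrank : ∀ k, (∃ φ : productCode (Fin n) C →ₗ[∀ i, R i] (Fin k → ∀ i, R i), Injective φ) ↔
      ∀ i, ∃ φ : C i →ₗ[R i] (Fin k → R i), Injective φ := fun k =>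
    (exists_injective_congr (productCodeEquiv _ C) (piCommLinearEquiv _)).trans
      exists_injective_pi_iff
  simp only [hrank] at hKp
  exact hKp.unique (isLeast_setOf_forall (fun i _ _ => exists_injective_fin_of_le) hK)

/-- The rank of a product code C = C₁ × ⋯ × C_w over a finite product of finite chain rings is
the maximum of the ranks of the component codes. -/
theorem stmt14 (w n : ℕ) (hw : 0 < w) (R : Fin w → Type*)
    [∀ i, CommRing (R i)] [∀ i, Finite (R i)] [∀ i, IsLocalRing (R i)]
    [∀ i, IsPrincipalIdealRing (R i)]
    (C : ∀ i, Submodule (R i) (Fin n → R i)) (K : Fin w → ℕ)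
    (hK : ∀ i, IsLeast {k | ∃ φ : (C i) →ₗ[R i] (Fin k → R i), Function.Injective φ} (K i))
    (Cprod : Submodule (∀ i, R i) (Fin n → ∀ i, R i))
    (hCprod : ∀ x : Fin n → ∀ i, R i, x ∈ Cprod ↔ ∀ i, (fun j => x j i) ∈ C i)
    (Kp : ℕ)
    (hKp : IsLeast {k | ∃ φ : Cprod →ₗ[∀ i, R i] (Fin k → ∀ i, R i),
      Function.Injective φ} Kp) :
    Kp = ⨆ i, K i :=
  stmt14_general w n R C K hK Cprod hCprod Kp hKp
end

section
/- Let R be a commutative ring, A a subtractive subset partitioned into blocks A_1,...,A_l, and suppose g is a polynomial of degree < |A| taking value c_i on each block A_i, where {c_1,...,c_l} is itself a subtractive set in R. Then 1, g, g^2 mod h, ..., g^{l-1} mod h form a basis of the free R-module F_A of rank l, where h is the annihilator polynomial of A and powers are reduced modulo h. -/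
/-!
Let `h = ∏_{a ∈ A} (X - a)` and `V` the Vandermonde matrix of `c`. Since `h` vanishes on `A` and
`g = c_j` on the block `A_j`, the polynomial `∑ coef_i • (g^i mod h)` takes the value `(V coef)_j`
on `A_j`. A polynomial of degree `< |A|` is determined by its values on the subtractive set `A`
(a Vandermonde argument on its coefficients), so `f = ∑ coef_i • (g^i mod h)` exactly when `V coef`
is the vector of values of `f` on the blocks. As `det V = ∏_{i<j} (c_j - c_i)` is a unit, `V` is
bijective, which gives the unique `coef`.
-/

open Polynomial Matrix Finset

theorem Matrix.isUnit_det_vandermonde {R : Type*} [CommRing R] {n : ℕ} {v : Fin n → R}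
    (hv : Pairwise fun i j => IsUnit (v i - v j)) : IsUnit (vandermonde v).det := by
  rw [det_vandermonde]
  exact IsUnit.prod_iff.2 fun i _ => IsUnit.prod_iff.2 fun j hj => hv (mem_Ioi.mp hj).ne'

theorem Matrix.mulVec_bijective_vandermonde {R : Type*} [CommRing R] {n : ℕ} {v : Fin n → R}
    (hv : Pairwise fun i j => IsUnit (v i - v j)) : Function.Bijective (vandermonde v).mulVec := by
  have hunit : IsUnit (vandermonde v) := (isUnit_iff_isUnit_det _).2 (isUnit_det_vandermonde hv)
  exact ⟨mulVec_injective_of_isUnit hunit, mulVec_surjective_iff_isUnit.2 hunit⟩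

namespace Polynomial

variable {R : Type*} [CommRing R]

theorem eq_zero_of_degree_lt_of_eval_finset_eq_zero_of_isUnit_sub {s : Finset R}
    (hs : (s : Set R).Pairwise fun a b => IsUnit (a - b)) {f : R[X]} (hf : f.degree < #s)
    (hfs : ∀ x ∈ s, f.eval x = 0) : f = 0 := by
  rw [← mem_degreeLT] at hf
  rw [← degreeLTEquiv_eq_zero_iff_eq_zero hf]
  set v : Fin #s → R := fun i => s.equivFin.symm i
  have hv : Pairwise fun i j => IsUnit (v i - v j) := fun i j hij =>
    hs (s.equivFin.symm i).2 (s.equivFin.symm j).2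
      (fun h => hij (s.equivFin.symm.injective (Subtype.ext h)))
  refine (mulVec_bijective_vandermonde hv).1 ?_
  ext i
  rw [mulVec_zero, Pi.zero_apply, ← hfs _ (s.equivFin.symm i).2, eval_eq_sum_degreeLTEquiv hf]
  simp [mulVec, dotProduct, vandermonde_apply, v, mul_comm]

theorem eq_iff_forall_eval_eq_of_degree_lt_of_isUnit_sub {s : Finset R}
    (hs : (s : Set R).Pairwise fun a b => IsUnit (a - b)) {f g : R[X]} (hf : f.degree < #s)
    (hg : g.degree < #s) : f = g ↔ ∀ x ∈ s, f.eval x = g.eval x := by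
  refine ⟨fun h _ _ => h ▸ rfl, fun h => sub_eq_zero.1 ?_⟩
  refine eq_zero_of_degree_lt_of_eval_finset_eq_zero_of_isUnit_sub hs ?_ fun x hx => ?_
  · exact (degree_sub_le f g).trans_lt (max_lt hf hg)
  · rw [eval_sub, h x hx, sub_self]

theorem degree_modByMonic_prod_X_sub_C_lt (s : Finset R) (p : R[X]) :
    (p %ₘ ∏ a ∈ s, (X - C a)).degree < #s := by
  nontriviality R
  have hmonic : (∏ a ∈ s, (X - C a)).Monic := monic_prod_of_monic _ _ fun a _ => monic_X_sub_C a
  simpa [degree_eq_natDegree hmonic.ne_zero] using degree_modByMonic_lt p hmonic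

theorem eval_modByMonic_eq_self_of_root {p q : R[X]} {x : R} (hx : q.eval x = 0) :
    (p %ₘ q).eval x = p.eval x :=
  eval₂_modByMonic_eq_self_of_root hx

theorem eval_sum_smul_pow_modByMonic {n : ℕ} {q g : R[X]} {x : R} {v : Fin n → R} {j : Fin n}
    (hq : q.eval x = 0) (hg : g.eval x = v j) (coef : Fin n → R) :
    (∑ i : Fin n, coef i • (g ^ (i : ℕ) %ₘ q)).eval x = (vandermonde v *ᵥ coef) j := by
  simp [eval_finsetSum, eval_modByMonic_eq_self_of_root hq, hg, mulVec, dotProduct,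
    vandermonde_apply, mul_comm]

end Polynomial

theorem stmt16_general (R : Type*) [CommRing R] [DecidableEq R] (l : ℕ) (A : Finset R) (B : Fin l → Finset R)
    (hsub : ∀ a ∈ A, ∀ b ∈ A, a ≠ b → IsUnit (a - b))
    (hne : ∀ i, (B i).Nonempty)
    (hunion : A = Finset.univ.biUnion B)
    (g : Polynomial R)
    (c : Fin l → R) (hgc : ∀ i, ∀ a ∈ B i, g.eval a = c i)
    (hcsub : ∀ i j, i ≠ j → IsUnit (c i - c j)) :
    ∀ f : Polynomial R, f.degree < (A.card : ℕ) →
      (∀ i, ∃ e : R, ∀ a ∈ B i, f.eval a = e) →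
      ∃! coef : Fin l → R,
        f = ∑ i : Fin l, coef i • (g ^ (i : ℕ) %ₘ (∏ a ∈ A, (Polynomial.X - Polynomial.C a))) := by
  intro f hf hconst
  choose e he using hconst
  set h := ∏ a ∈ A, (X - C a)
  have hdeg (coef : Fin l → R) : (∑ i, coef i • (g ^ (i : ℕ) %ₘ h)).degree < #A :=
    mem_degreeLT.1 <| Submodule.sum_mem _ fun i _ =>
      Submodule.smul_mem _ _ <| mem_degreeLT.2 (degree_modByMonic_prod_X_sub_C_lt A _)
  have hroot {j : Fin l} {a : R} (ha : a ∈ B j) : h.eval a = 0 := by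
    rw [eval_prod]
    exact prod_eq_zero (hunion ▸ mem_biUnion.2 ⟨j, mem_univ j, ha⟩) (by simp)
  have key (coef : Fin l → R) :
      f = ∑ i, coef i • (g ^ (i : ℕ) %ₘ h) ↔ vandermonde c *ᵥ coef = e := by
    rw [eq_iff_forall_eval_eq_of_degree_lt_of_isUnit_sub hsub hf (hdeg coef), funext_iff, hunion]
    simp only [mem_biUnion, mem_univ, true_and, forall_exists_index]
    rw [forall_comm]
    refine forall_congr' fun j => ?_
    calc (∀ a ∈ B j, f.eval a = (∑ i, coef i • (g ^ (i : ℕ) %ₘ h)).eval a)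
        ↔ ∀ a ∈ B j, e j = (vandermonde c *ᵥ coef) j := forall₂_congr fun a ha => by
          rw [he j a ha, eval_sum_smul_pow_modByMonic (hroot ha) (hgc j a ha)]
      _ ↔ _ := (hne j).forall_const.trans eq_comm
  exact (existsUnique_congr key).2 ((mulVec_bijective_vandermonde hcsub).existsUnique e)

/-- If g ∈ R[x] has degree < |A|, is constant with value c_i on each block A_i of a partition
of a subtractive set A, and {c₁,…,c_l} is itself subtractive, then the reduced powers
1, g, …, g^{l-1} (mod the annihilator h of A) form a basis of the R-module F_A. -/
theorem stmt16 (R : Type*) [CommRing R] [DecidableEq R] (l : ℕ) (A : Finset R) (B : Fin l → Finset R)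
    (hsub : ∀ a ∈ A, ∀ b ∈ A, a ≠ b → IsUnit (a - b))
    (hne : ∀ i, (B i).Nonempty)
    (hdisj : ∀ i j, i ≠ j → Disjoint (B i) (B j))
    (hunion : A = Finset.univ.biUnion B)
    (g : Polynomial R) (hgdeg : g.degree < (A.card : ℕ))
    (c : Fin l → R) (hgc : ∀ i, ∀ a ∈ B i, g.eval a = c i)
    (hcsub : ∀ i j, i ≠ j → IsUnit (c i - c j)) :
    ∀ f : Polynomial R, f.degree < (A.card : ℕ) →
      (∀ i, ∃ e : R, ∀ a ∈ B i, f.eval a = e) →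
      ∃! coef : Fin l → R,
        f = ∑ i : Fin l, coef i • (g ^ (i : ℕ) %ₘ (∏ a ∈ A, (Polynomial.X - Polynomial.C a))) :=
  stmt16_general R l A B hsub hne hunion g c hgc hcsub
end

section
/- Let R be a commutative ring and let A = ∪_{i=1}^l A_i be a subtractive set with |A_i| = r+1 for all i. Suppose g ∈ R[x] is a monic polynomial of degree r+1 with g constant on each A_i. Then for distinct i, j, the values g(A_i) and g(A_j) are distinct; in fact g(A_i) - g(A_j) cannot annihilate any nonzero element of R when R is a finite chain ring (i.e., the values form a subtractive set). -/
/-!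
Roots with pairwise unit differences behave like roots over a field: the factors `X - a` are
pairwise coprime, so a monic polynomial of degree `|s|` vanishing on such a set `s` equals
`∏ a ∈ s, (X - a)`. Applied to `g - g(A_i)` and evaluated at a point `b ∈ A_j`, this writes
`g(A_j) - g(A_i)` as a product of the units `b - a`, `a ∈ A_i`.
-/
open Polynomial

namespace Polynomial

variable {R : Type*} [CommRing R]

theorem prod_X_sub_C_dvd_of_isUnit_sub {s : Finset R} {p : R[X]}
    (hs : (s : Set R).Pairwise fun a b => IsUnit (a - b)) (hroot : ∀ a ∈ s, p.IsRoot a) :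
    ∏ a ∈ s, (X - C a) ∣ p :=
  Finset.prod_dvd_of_coprime (hs.mono' fun _ _ => isCoprime_X_sub_C_of_isUnit_sub)
    fun a ha => dvd_iff_isRoot.2 (hroot a ha)

theorem Monic.eq_prod_X_sub_C_of_isUnit_sub [Nontrivial R] {s : Finset R} {p : R[X]}
    (hp : p.Monic) (hdeg : p.natDegree = s.card)
    (hs : (s : Set R).Pairwise fun a b => IsUnit (a - b))
    (hroot : ∀ a ∈ s, p.IsRoot a) : p = ∏ a ∈ s, (X - C a) :=
  eq_of_monic_of_dvd_of_natDegree_le (monic_prod_X_sub_C id s) hp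
    (prod_X_sub_C_dvd_of_isUnit_sub hs hroot)
    (hdeg.trans (natDegree_finsetProd_X_sub_C_eq_card s id).symm).le

theorem isUnit_eval_prod_X_sub_C {s : Finset R} {b : R} (hb : ∀ a ∈ s, IsUnit (b - a)) :
    IsUnit ((∏ a ∈ s, (X - C a)).eval b) := by
  rw [eval_prod]
  exact IsUnit.prod_iff.2 fun a ha => by simpa using hb a ha

theorem Monic.isUnit_eval_sub_of_eval_eq [Nontrivial R] {g : R[X]} {s : Finset R} {c b : R}
    (hg : g.Monic) (hdeg : g.natDegree = s.card) (hs0 : s.Nonempty)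
    (hs : (s : Set R).Pairwise fun a b => IsUnit (a - b)) (hc : ∀ a ∈ s, g.eval a = c)
    (hb : ∀ a ∈ s, IsUnit (b - a)) : IsUnit (g.eval b - c) := by
  have hmonic : (g - C c).Monic :=
    hg.sub_of_left <| degree_C_le.trans_lt <|
      natDegree_pos_iff_degree_pos.1 <| hdeg ▸ hs0.card_pos
  have hprod : g - C c = ∏ a ∈ s, (X - C a) :=
    hmonic.eq_prod_X_sub_C_of_isUnit_sub (by rw [natDegree_sub_C, hdeg]) hs
      fun a ha => by simp [hc a ha]
  simpa [← hprod] using isUnit_eval_prod_X_sub_C hb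

end Polynomial

theorem stmt17_general (R : Type*) [CommRing R] [DecidableEq R]
    (l r : ℕ) (A : Finset R) (B : Fin l → Finset R)
    (hsub : ∀ a ∈ A, ∀ b ∈ A, a ≠ b → IsUnit (a - b))
    (hcard : ∀ i, (B i).card = r + 1)
    (hdisj : ∀ i j, i ≠ j → Disjoint (B i) (B j))
    (hunion : A = Finset.univ.biUnion B)
    (g : Polynomial R) (hmonic : g.Monic) (hdeg : g.natDegree = r + 1)
    (c : Fin l → R) (hgc : ∀ i, ∀ a ∈ B i, g.eval a = c i)
    (i j : Fin l) (hij : i ≠ j) :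
    c i ≠ c j ∧ IsUnit (c i - c j) := by
  have hBA (k : Fin l) : B k ⊆ A := hunion ▸ Finset.subset_biUnion_of_mem B (Finset.mem_univ k)
  have hnonempty (k : Fin l) : (B k).Nonempty := Finset.card_pos.1 (by simp [hcard])
  have : Nontrivial R := Polynomial.nontrivial_iff.1 ⟨g, 0, fun h => by simp [h] at hdeg⟩
  obtain ⟨b, hb⟩ := hnonempty j
  have hunit : IsUnit (c j - c i) := by
    rw [← hgc j b hb]
    refine hmonic.isUnit_eval_sub_of_eval_eq (hdeg.trans (hcard i).symm) (hnonempty i)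
      (fun x hx y hy hxy => hsub x (hBA i hx) y (hBA i hy) hxy) (hgc i) fun a ha => ?_
    exact hsub b (hBA j hb) a (hBA i ha) fun hba =>
      Finset.disjoint_left.1 (hdisj i j hij) ha (hba ▸ hb)
  exact ⟨fun h => by simp [h] at hunit, by simpa using hunit.neg⟩

/-- If g is a monic polynomial of degree r+1 over a finite chain ring R, constant on each block
of a partition of a subtractive set A into blocks of size r+1, then the values of g on
distinct blocks are distinct and their differences are units (they form a subtractive set). -/
theorem stmt17 (R : Type*) [CommRing R] [DecidableEq R] [IsLocalRing R] [Finite R] [IsPrincipalIdealRing R]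
    (l r : ℕ) (A : Finset R) (B : Fin l → Finset R)
    (hsub : ∀ a ∈ A, ∀ b ∈ A, a ≠ b → IsUnit (a - b))
    (hcard : ∀ i, (B i).card = r + 1)
    (hdisj : ∀ i j, i ≠ j → Disjoint (B i) (B j))
    (hunion : A = Finset.univ.biUnion B)
    (g : Polynomial R) (hmonic : g.Monic) (hdeg : g.natDegree = r + 1)
    (c : Fin l → R) (hgc : ∀ i, ∀ a ∈ B i, g.eval a = c i)
    (i j : Fin l) (hij : i ≠ j) :
    c i ≠ c j ∧ IsUnit (c i - c j) :=
  stmt17_general R l r A B hsub hcard hdisj hunion g hmonic hdeg c hgc i j hij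
end
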